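/- arXiv:1802.00091 — 2 statements merged into one kernel-verified Lean document; each statement's English description precedes it below -/
import Mathlib

section
/- Let λ ∈ ℂ with Δ(λ) ≠ 0, let f : (0,1) → ℂ satisfy ∫₀¹ |f(x)|²/|b₀(x)| dx < ∞, and suppose u₀ : [0,1] → ℂ (with u₀, u₀' absolutely continuous) satisfies (l − λ)u₀ = f and u₀(0) = u₀(1) = 0. Define g₀(x) = ([y₂(1,λ) − ∫₀¹ y₂(·,λ)dν₁]·y₁(x,λ) − [y₁(1,λ) − ∫₀¹ y₁(·,λ)dν₁]·y₂(x,λ))/Δ(λ) and g₁(x) = ([1 − ∫₀¹ y₁(·,λ)dν₀]·y₂(x,λ) + y₁(x,λ)·∫₀¹ y₂(·,λ)dν₀)/Δ(λ). Then u := u₀ + (∫₀¹ u₀ dν₀)·g₀ + (∫₀¹ u₀ dν₁)·g₁ satisfies (l − λ)u = f together with the jump boundary conditions u(0) = ∫₀¹ u dν₀ and u(1) = ∫₀¹ u dν₁, and u is the unique such function. -/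
/-!
A solution `w` of the homogeneous equation equals `w(0) y₁ + w'(0) y₂` on `[0, 1]`: the
difference `d` has zero initial data, and Grönwall's inequality applied to `‖d‖ + ‖d'‖`, with the
integrable kernel `1 + ‖λ‖ / |b₀| + |b₁ / b₀|`, makes it vanish. Integrals against `ν₀, ν₁` of
homogeneous solutions are therefore linear in the initial data. Writing `Uᵢ y = ∫ y dνᵢ - y i`,
the functions `g₀, g₁` solve the homogeneous equation with `U₀ g₀ = U₁ g₁ = -1` and
`U₀ g₁ = U₁ g₀ = 0`, which gives the boundary conditions for `u`. The difference of two solutions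
of the boundary value problem is `α y₁ + β y₂` with `(α, β)` in the kernel of the matrix of
determinant `Δ ≠ 0`, hence zero.
-/

open MeasureTheory Set

noncomputable section

/-- `(l - lam) y = f` on `(0,1)`: `y` has derivative `y'`, `y'` has an integrable
derivative `g` (absolute continuity), and `b₀ g + b₁ y' - lam y = f` a.e. on `(0,1)`. -/
def IsSolAux (b₀ b₁ : ℝ → ℝ) (lam : ℂ) (f : ℝ → ℂ) (y y' : ℝ → ℂ) : Prop :=
  ∃ g : ℝ → ℂ, IntegrableOn g (Ioo 0 1) volume ∧
    (∀ x ∈ Icc (0:ℝ) 1, y x = y 0 + ∫ t in (0:ℝ)..x, y' t) ∧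
    (∀ x ∈ Icc (0:ℝ) 1, y' x = y' 0 + ∫ t in (0:ℝ)..x, g t) ∧
    (∀ᵐ x ∂(volume.restrict (Ioo (0:ℝ) 1)),
      (b₀ x : ℂ) * g x + (b₁ x : ℂ) * y' x - lam * y x = f x)

/-- `y` (with derivative `y'`) is a solution of `b₀ y'' + b₁ y' = lam y` on `[0,1]`. -/
def IsSol (b₀ b₁ : ℝ → ℝ) (lam : ℂ) (y y' : ℝ → ℂ) : Prop :=
  IsSolAux b₀ b₁ lam 0 y y'

/-- The standing assumptions on the coefficients `b₀`, `b₁`. -/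
def CoeffOK (b₀ b₁ : ℝ → ℝ) : Prop :=
  Measurable b₀ ∧ Measurable b₁ ∧
    (∀ᵐ x ∂(volume.restrict (Ioo (0:ℝ) 1)), b₀ x < 0) ∧
    IntegrableOn (fun x => 1 / b₀ x) (Ioo 0 1) volume ∧
    IntegrableOn (fun x => b₁ x / b₀ x) (Ioo 0 1) volume

open Interval Filter Topology

section Analysis

variable {a b : ℝ}

theorem MeasureTheory.IntegrableOn.intervalIntegrable_of_mem {E : Type*} [NormedAddCommGroup E]
    {f : ℝ → E} (hf : IntegrableOn f (Icc a b)) {c d : ℝ} (hc : c ∈ Icc a b)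
    (hd : d ∈ Icc a b) : IntervalIntegrable f volume c d :=
  (hf.mono_set (uIcc_subset_Icc hc hd)).intervalIntegrable

theorem integrableOn_Icc_of_integrableOn_Ioo {E : Type*} [NormedAddCommGroup E] {f : ℝ → E}
    (hf : IntegrableOn f (Ioo a b)) : IntegrableOn f (Icc a b) := by
  rwa [integrableOn_Icc_iff_integrableOn_Ioo]

theorem continuousOn_intervalIntegral_of_integrableOn_Icc {E : Type*} [NormedAddCommGroup E]
    [NormedSpace ℝ E] {f : ℝ → E} (hf : IntegrableOn f (Icc a b)) :
    ContinuousOn (fun x => ∫ t in a..x, f t) (Icc a b) := by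
  rcases le_or_gt a b with hab | hba
  · rw [← uIcc_of_le hab] at hf ⊢
    exact intervalIntegral.continuousOn_primitive_interval hf
  · simp [Icc_eq_empty_of_lt hba]

theorem MeasureTheory.IntegrableOn.exists_intervalIntegral_lt {K : ℝ → ℝ}
    (hK : IntegrableOn K (Icc a b)) (hab : a < b) {ε : ℝ} (hε : 0 < ε) :
    ∃ c ∈ Ioc a b, ∫ s in a..c, K s < ε := by
  have hIcc : ∀ᶠ x in 𝓝[>] a, x ∈ Icc a b := Icc_mem_nhdsGT hab
  have hcont : ContinuousWithinAt (fun x => ∫ s in a..x, K s) (Icc a b) a :=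
    continuousOn_intervalIntegral_of_integrableOn_Icc hK a (left_mem_Icc.2 hab.le)
  have hsmall : ∀ᶠ x in 𝓝[>] a, ∫ s in a..x, K s < ε :=
    (hcont.mono_of_mem_nhdsWithin hIcc).eventually (gt_mem_nhds (by simpa using hε))
  obtain ⟨c, hc, hcIcc, hac⟩ := (hsmall.and (hIcc.and self_mem_nhdsWithin)).exists
  exact ⟨c, ⟨hac, hcIcc.2⟩, hc⟩

theorem ContinuousOn.integrable_of_ae_mem {X E : Type*} [TopologicalSpace X] [T2Space X]
    [MeasurableSpace X] [OpensMeasurableSpace X] [NormedAddCommGroup E] {f : X → E} {s : Set X}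
    (hs : IsCompact s) (hf : ContinuousOn f s) {μ : Measure X} [IsFiniteMeasure μ]
    (hμ : ∀ᵐ x ∂μ, x ∈ s) : Integrable f μ := by
  simpa [IntegrableOn, Measure.restrict_eq_self_of_ae_mem hμ] using
    hf.integrableOn_compact (μ := μ) hs

theorem integral_add_mul {α 𝕜 : Type*} [MeasurableSpace α] [RCLike 𝕜] {μ : Measure α}
    {p q : α → 𝕜} (hp : Integrable p μ) (hq : Integrable q μ) (c : 𝕜) :
    ∫ x, p x + c * q x ∂μ = ∫ x, p x ∂μ + c * ∫ x, q x ∂μ := by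
  rw [integral_add hp (hq.const_mul c), integral_const_mul]

end Analysis

theorem eq_zero_of_mul_add_mul_eq_zero {R : Type*} [CommRing R] [NoZeroDivisors R]
    {a b c d α β : R} (hdet : a * d - b * c ≠ 0) (h₁ : α * a + β * b = 0)
    (h₂ : α * c + β * d = 0) : α = 0 ∧ β = 0 := by
  constructor
  · refine (mul_eq_zero.1 ?_).resolve_right hdet
    linear_combination d * h₁ - b * h₂
  · refine (mul_eq_zero.1 ?_).resolve_right hdet
    linear_combination a * h₂ - c * h₁

section Gronwall

variable {h K : ℝ → ℝ} {a b : ℝ}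

/-- If `∫ K ≤ 1/2` over the whole interval, then `h ≤ ∫ K h` gives `max h ≤ (max h) / 2`. -/
theorem eqOn_zero_of_le_integral_mul_of_integral_le_half
    (hh : ContinuousOn h (Icc a b)) (hh0 : ∀ x ∈ Icc a b, 0 ≤ h x)
    (hK : IntegrableOn K (Icc a b)) (hK0 : ∀ x ∈ Icc a b, 0 ≤ K x)
    (hKb : ∫ s in a..b, K s ≤ 1 / 2)
    (hle : ∀ x ∈ Icc a b, h x ≤ ∫ t in a..x, K t * h t) :
    ∀ x ∈ Icc a b, h x = 0 := by
  intro x hx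
  have hab : a ≤ b := hx.1.trans hx.2
  have ha : a ∈ Icc a b := left_mem_Icc.2 hab
  have hb : b ∈ Icc a b := right_mem_Icc.2 hab
  have hKh : IntegrableOn (fun t => K t * h t) (Icc a b) := hK.mul_continuousOn hh isCompact_Icc
  obtain ⟨x₀, hx₀, hmax⟩ := isCompact_Icc.exists_isMaxOn (nonempty_Icc.2 hab) hh
  have hhalf : ∀ x ∈ Icc a b, h x ≤ h x₀ / 2 := by
    intro x hx
    calc h x ≤ ∫ s in a..x, K s * h s := hle x hx
      _ ≤ ∫ s in a..b, K s * h s := by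
        refine intervalIntegral.integral_mono_interval le_rfl hx.1 hx.2 ?_
          (hKh.intervalIntegrable_of_mem ha hb)
        filter_upwards [ae_restrict_mem measurableSet_Ioc] with s hs
        exact mul_nonneg (hK0 s (Ioc_subset_Icc_self hs)) (hh0 s (Ioc_subset_Icc_self hs))
      _ ≤ ∫ s in a..b, K s * h x₀ := by
        refine intervalIntegral.integral_mono_on hab (hKh.intervalIntegrable_of_mem ha hb)
          ((hK.intervalIntegrable_of_mem ha hb).mul_const _) fun s hs => ?_
        exact mul_le_mul_of_nonneg_left (hmax hs) (hK0 s hs)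
      _ = (∫ s in a..b, K s) * h x₀ := intervalIntegral.integral_mul_const _ _
      _ ≤ 1 / 2 * h x₀ := by gcongr; exact hh0 x₀ hx₀
      _ = h x₀ / 2 := by ring
  have hx₀0 : h x₀ = 0 := le_antisymm (by linarith [hhalf x₀ hx₀]) (hh0 x₀ hx₀)
  exact le_antisymm (hx₀0 ▸ hmax hx) (hh0 x hx)

/-- Continuous induction: if `h` vanishes on `[a, t]`, it also vanishes on a short interval
`[t, t']` with `∫ K ≤ 1/2`, where the previous lemma applies. -/
theorem eqOn_zero_of_le_integral_mul
    (hh : ContinuousOn h (Icc a b)) (hh0 : ∀ x ∈ Icc a b, 0 ≤ h x)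
    (hK : IntegrableOn K (Icc a b)) (hK0 : ∀ x ∈ Icc a b, 0 ≤ K x)
    (hle : ∀ x ∈ Icc a b, h x ≤ ∫ t in a..x, K t * h t) :
    ∀ x ∈ Icc a b, h x = 0 := by
  intro x hx
  have hab : a ≤ b := hx.1.trans hx.2
  have hKh : IntegrableOn (fun t => K t * h t) (Icc a b) := hK.mul_continuousOn hh isCompact_Icc
  suffices Icc a b ⊆ {x | h x = 0} from this hx
  refine IsClosed.Icc_subset_of_forall_mem_nhdsGT_of_Icc_subset ?_ ?_ ?_
  · rw [inter_comm]
    exact hh.preimage_isClosed_of_isClosed isClosed_Icc isClosed_singleton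
  · have ha : a ∈ Icc a b := left_mem_Icc.2 hab
    exact le_antisymm (by simpa using hle a ha) (hh0 a ha)
  intro t ht hzero
  obtain ⟨t', ⟨htt', ht'b⟩, hKt'⟩ :=
    (hK.mono_set (Icc_subset_Icc_left ht.1)).exists_intervalIntegral_lt ht.2 one_half_pos
  have hsub : Icc t t' ⊆ Icc a b := Icc_subset_Icc ht.1 ht'b
  have hle' : ∀ x ∈ Icc t t', h x ≤ ∫ s in t..x, K s * h s := by
    intro x hx
    have hvanish : ∫ s in a..t, K s * h s = 0 := by
      rw [intervalIntegral.integral_congr (g := fun _ => 0), intervalIntegral.integral_zero]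
      intro s hs
      rw [uIcc_of_le ht.1] at hs
      simp [show h s = 0 from hzero hs]
    rw [← zero_add (∫ s in t..x, K s * h s), ← hvanish,
      intervalIntegral.integral_add_adjacent_intervals
        (hKh.intervalIntegrable_of_mem (left_mem_Icc.2 hab) (Ico_subset_Icc_self ht))
        (hKh.intervalIntegrable_of_mem (Ico_subset_Icc_self ht) (hsub hx))]
    exact hle x (hsub hx)
  filter_upwards [Icc_mem_nhdsGT htt'] with x hx
  exact eqOn_zero_of_le_integral_mul_of_integral_le_half (hh.mono hsub)
    (fun x hx => hh0 x (hsub hx)) (hK.mono_set hsub) (fun x hx => hK0 x (hsub hx)) hKt'.le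
    hle' x hx

end Gronwall

theorem norm_add_norm_le_of_mul_add_mul_sub_mul_eq_zero {β₀ β₁ : ℝ} {lam g w w' : ℂ}
    (hβ₀ : β₀ ≠ 0) (h : β₀ * g + β₁ * w' - lam * w = 0) :
    ‖w'‖ + ‖g‖ ≤ (1 + ‖lam‖ * |1 / β₀| + |β₁ / β₀|) * (‖w‖ + ‖w'‖) := by
  have hg : g = (1 / β₀ : ℝ) * lam * w - (β₁ / β₀ : ℝ) * w' := by
    have hβ : (β₀ : ℂ) ≠ 0 := by exact_mod_cast hβ₀
    push_cast
    field_simp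
    linear_combination h
  have hng : ‖g‖ ≤ |1 / β₀| * ‖lam‖ * ‖w‖ + |β₁ / β₀| * ‖w'‖ := by
    rw [hg]
    refine (norm_sub_le _ _).trans_eq ?_
    simp only [norm_mul, Complex.norm_real, Real.norm_eq_abs]
  nlinarith [norm_nonneg w, norm_nonneg w', norm_nonneg lam, abs_nonneg (1 / β₀),
    abs_nonneg (β₁ / β₀), mul_nonneg (norm_nonneg lam) (abs_nonneg (1 / β₀))]

section Solutions

variable {b₀ b₁ : ℝ → ℝ} {lam : ℂ} {f g y y' z z' w w' y₁ y₁' y₂ y₂' : ℝ → ℂ}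

theorem IsSolAux.continuousOn_deriv (h : IsSolAux b₀ b₁ lam f y y') :
    ContinuousOn y' (Icc 0 1) := by
  obtain ⟨g, hg, -, hy', -⟩ := h
  exact (continuousOn_const.add (continuousOn_intervalIntegral_of_integrableOn_Icc
    (integrableOn_Icc_of_integrableOn_Ioo hg))).congr hy'

theorem IsSolAux.continuousOn (h : IsSolAux b₀ b₁ lam f y y') : ContinuousOn y (Icc 0 1) := by
  have hy' := h.continuousOn_deriv
  obtain ⟨g, -, hy, -, -⟩ := h
  exact (continuousOn_const.add (continuousOn_intervalIntegral_of_integrableOn_Icc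
    (hy'.integrableOn_Icc (μ := volume)))).congr hy

theorem IsSolAux.integrable (h : IsSolAux b₀ b₁ lam f y y') {ν : Measure ℝ} [IsFiniteMeasure ν]
    (hν : ∀ᵐ x ∂ν, x ∈ Icc (0:ℝ) 1) : Integrable y ν :=
  h.continuousOn.integrable_of_ae_mem isCompact_Icc hν

theorem IsSolAux.linearCombination (hy : IsSolAux b₀ b₁ lam f y y')
    (hz : IsSolAux b₀ b₁ lam g z z') (a b : ℂ) :
    IsSolAux b₀ b₁ lam (fun x => a * f x + b * g x) (fun x => a * y x + b * z x)
      (fun x => a * y' x + b * z' x) := by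
  have hy'i := hy.continuousOn_deriv.integrableOn_Icc (μ := volume)
  have hz'i := hz.continuousOn_deriv.integrableOn_Icc (μ := volume)
  obtain ⟨k, hk, hy, hy', hyeq⟩ := hy
  obtain ⟨l, hl, hz, hz', hzeq⟩ := hz
  have hki := integrableOn_Icc_of_integrableOn_Ioo hk
  have hli := integrableOn_Icc_of_integrableOn_Ioo hl
  have h0 : (0 : ℝ) ∈ Icc 0 1 := left_mem_Icc.2 zero_le_one
  refine ⟨fun x => a * k x + b * l x, (hk.const_mul a).add (hl.const_mul b), ?_, ?_, ?_⟩
  · intro x hx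
    dsimp only
    rw [intervalIntegral.integral_add ((hy'i.intervalIntegrable_of_mem h0 hx).const_mul a)
        ((hz'i.intervalIntegrable_of_mem h0 hx).const_mul b),
      intervalIntegral.integral_const_mul, intervalIntegral.integral_const_mul,
      hy x hx, hz x hx]
    ring
  · intro x hx
    dsimp only
    rw [intervalIntegral.integral_add ((hki.intervalIntegrable_of_mem h0 hx).const_mul a)
        ((hli.intervalIntegrable_of_mem h0 hx).const_mul b),
      intervalIntegral.integral_const_mul, intervalIntegral.integral_const_mul,
      hy' x hx, hz' x hx]
    ring
  · filter_upwards [hyeq, hzeq] with x hy hz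
    linear_combination a * hy + b * hz

theorem IsSol.linearCombination (hy : IsSol b₀ b₁ lam y y') (hz : IsSol b₀ b₁ lam z z')
    (a b : ℂ) :
    IsSol b₀ b₁ lam (fun x => a * y x + b * z x) (fun x => a * y' x + b * z' x) := by
  simpa [IsSol, ← Pi.zero_def] using IsSolAux.linearCombination hy hz a b

theorem IsSolAux.add_mul_isSol (hy : IsSolAux b₀ b₁ lam f y y') (hz : IsSol b₀ b₁ lam z z')
    (c : ℂ) :
    IsSolAux b₀ b₁ lam f (fun x => y x + c * z x) (fun x => y' x + c * z' x) := by
  simpa using hy.linearCombination hz 1 c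

theorem IsSolAux.sub (hy : IsSolAux b₀ b₁ lam f y y') (hz : IsSolAux b₀ b₁ lam f z z') :
    IsSol b₀ b₁ lam (fun x => y x - z x) (fun x => y' x - z' x) := by
  simpa [IsSol, ← sub_eq_add_neg, ← Pi.zero_def] using hy.linearCombination hz 1 (-1)

theorem IsSol.eq_zero_of_initial_eq_zero (hco : CoeffOK b₀ b₁) (hw : IsSol b₀ b₁ lam w w')
    (h0 : w 0 = 0) (h0' : w' 0 = 0) : ∀ x ∈ Icc (0:ℝ) 1, w x = 0 := by
  have hc : ContinuousOn (fun x => ‖w x‖ + ‖w' x‖) (Icc 0 1) :=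
    hw.continuousOn.norm.add hw.continuousOn_deriv.norm
  have hw'i := hw.continuousOn_deriv.integrableOn_Icc (μ := volume)
  obtain ⟨g, hg, hw, hw', heq⟩ := hw
  obtain ⟨-, -, hb₀, hib₀, hib₁⟩ := hco
  set K : ℝ → ℝ := fun x => 1 + ‖lam‖ * |1 / b₀ x| + |b₁ x / b₀ x|
  have hK : IntegrableOn K (Icc 0 1) := integrableOn_Icc_of_integrableOn_Ioo
    (((integrableOn_const (by simp)).add (hib₀.abs.const_mul _)).add hib₁.abs)
  have hbound : ∀ᵐ t ∂volume.restrict (Icc 0 1),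
      ‖w' t‖ + ‖g t‖ ≤ K t * (‖w t‖ + ‖w' t‖) := by
    rw [Measure.restrict_congr_set Ioo_ae_eq_Icc.symm]
    filter_upwards [heq, hb₀] with t ht hbt
    exact norm_add_norm_le_of_mul_add_mul_sub_mul_eq_zero hbt.ne ht
  have hvanish := eqOn_zero_of_le_integral_mul hc (fun _ _ => by positivity) hK
    (fun _ _ => by positivity) fun x hx => ?_
  · intro x hx
    have := hvanish x hx
    exact norm_eq_zero.1 (by linarith [norm_nonneg (w x), norm_nonneg (w' x)])
  have h0x : (0:ℝ) ∈ Icc 0 1 := left_mem_Icc.2 zero_le_one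
  have hgi := integrableOn_Icc_of_integrableOn_Ioo hg
  calc ‖w x‖ + ‖w' x‖ = ‖∫ t in 0..x, w' t‖ + ‖∫ t in 0..x, g t‖ := by
        rw [hw x hx, hw' x hx, h0, h0', zero_add, zero_add]
    _ ≤ (∫ t in 0..x, ‖w' t‖) + ∫ t in 0..x, ‖g t‖ :=
        add_le_add (intervalIntegral.norm_integral_le_integral_norm hx.1)
          (intervalIntegral.norm_integral_le_integral_norm hx.1)
    _ = ∫ t in 0..x, ‖w' t‖ + ‖g t‖ :=
        (intervalIntegral.integral_add (hw'i.intervalIntegrable_of_mem h0x hx).norm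
          (hgi.intervalIntegrable_of_mem h0x hx).norm).symm
    _ ≤ ∫ t in 0..x, K t * (‖w t‖ + ‖w' t‖) :=
        intervalIntegral.integral_mono_ae_restrict hx.1
          ((hw'i.intervalIntegrable_of_mem h0x hx).norm.add
            (hgi.intervalIntegrable_of_mem h0x hx).norm)
          ((hK.mul_continuousOn hc isCompact_Icc).intervalIntegrable_of_mem h0x hx)
          (ae_restrict_of_ae_restrict_of_subset (Icc_subset_Icc_right hx.2) hbound)

structure IsFundamentalSystem (b₀ b₁ : ℝ → ℝ) (lam : ℂ) (y₁ y₁' y₂ y₂' : ℝ → ℂ) : Prop where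
  isSol₁ : IsSol b₀ b₁ lam y₁ y₁'
  init₁ : y₁ 0 = 1
  init₁' : y₁' 0 = 0
  isSol₂ : IsSol b₀ b₁ lam y₂ y₂'
  init₂ : y₂ 0 = 0
  init₂' : y₂' 0 = 1

namespace IsFundamentalSystem

theorem eq_of_isSol (hco : CoeffOK b₀ b₁) (hY : IsFundamentalSystem b₀ b₁ lam y₁ y₁' y₂ y₂')
    (hz : IsSol b₀ b₁ lam z z') : ∀ x ∈ Icc (0:ℝ) 1, z x = z 0 * y₁ x + z' 0 * y₂ x := by
  have hd := IsSolAux.sub hz (hY.isSol₁.linearCombination hY.isSol₂ (z 0) (z' 0))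
  intro x hx
  refine sub_eq_zero.1 (hd.eq_zero_of_initial_eq_zero hco ?_ ?_ x hx) <;>
    simp [hY.init₁, hY.init₁', hY.init₂, hY.init₂']

theorem integral_eq_of_isSol (hco : CoeffOK b₀ b₁)
    (hY : IsFundamentalSystem b₀ b₁ lam y₁ y₁' y₂ y₂')
    (hz : IsSol b₀ b₁ lam z z') {ν : Measure ℝ} [IsFiniteMeasure ν]
    (hν : ∀ᵐ x ∂ν, x ∈ Icc (0:ℝ) 1) :
    ∫ x, z x ∂ν = z 0 * ∫ x, y₁ x ∂ν + z' 0 * ∫ x, y₂ x ∂ν := by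
  rw [integral_congr_ae (hν.mono (hY.eq_of_isSol hco hz)), integral_add
    ((hY.isSol₁.integrable hν).const_mul _) ((hY.isSol₂.integrable hν).const_mul _),
    integral_const_mul, integral_const_mul]

theorem integral_add_mul_add_mul (hco : CoeffOK b₀ b₁)
    (hY : IsFundamentalSystem b₀ b₁ lam y₁ y₁' y₂ y₂') {u u' g₀ g₀' g₁ g₁' : ℝ → ℂ}
    (hu : IsSolAux b₀ b₁ lam f u u') (hg₀ : IsSol b₀ b₁ lam g₀ g₀')
    (hg₁ : IsSol b₀ b₁ lam g₁ g₁') (c₀ c₁ : ℂ) {ν : Measure ℝ} [IsFiniteMeasure ν]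
    (hν : ∀ᵐ x ∂ν, x ∈ Icc (0:ℝ) 1) :
    ∫ x, u x + c₀ * g₀ x + c₁ * g₁ x ∂ν = ∫ x, u x ∂ν
      + c₀ * (g₀ 0 * ∫ x, y₁ x ∂ν + g₀' 0 * ∫ x, y₂ x ∂ν)
      + c₁ * (g₁ 0 * ∫ x, y₁ x ∂ν + g₁' 0 * ∫ x, y₂ x ∂ν) := by
  rw [integral_add_mul ((hu.add_mul_isSol hg₀ c₀).integrable hν) (hg₁.integrable hν),
    integral_add_mul (hu.integrable hν) (hg₀.integrable hν), hY.integral_eq_of_isSol hco hg₀ hν,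
    hY.integral_eq_of_isSol hco hg₁ hν]

theorem eq_zero_of_boundary (hco : CoeffOK b₀ b₁)
    (hY : IsFundamentalSystem b₀ b₁ lam y₁ y₁' y₂ y₂') {ν₀ ν₁ : Measure ℝ}
    [IsFiniteMeasure ν₀] [IsFiniteMeasure ν₁] (hν₀ : ∀ᵐ x ∂ν₀, x ∈ Icc (0:ℝ) 1)
    (hν₁ : ∀ᵐ x ∂ν₁, x ∈ Icc (0:ℝ) 1)
    (hΔ : ((∫ x, y₁ x ∂ν₀) - 1) * ((∫ x, y₂ x ∂ν₁) - y₂ 1) -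
        (∫ x, y₂ x ∂ν₀) * ((∫ x, y₁ x ∂ν₁) - y₁ 1) ≠ 0)
    (hw : IsSol b₀ b₁ lam w w') (hw₀ : w 0 = ∫ x, w x ∂ν₀) (hw₁ : w 1 = ∫ x, w x ∂ν₁) :
    ∀ x ∈ Icc (0:ℝ) 1, w x = 0 := by
  have hrep := hY.eq_of_isSol hco hw
  have hw1 := hrep 1 (right_mem_Icc.2 zero_le_one)
  rw [hY.integral_eq_of_isSol hco hw hν₀] at hw₀
  rw [hY.integral_eq_of_isSol hco hw hν₁] at hw₁
  obtain ⟨h0, h0'⟩ := eq_zero_of_mul_add_mul_eq_zero (α := w 0) (β := w' 0) hΔ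
    (by linear_combination -hw₀) (by linear_combination hw1 - hw₁)
  intro x hx
  simp [hrep x hx, h0, h0']

end IsFundamentalSystem

theorem IsSolAux.eq_of_boundary (hco : CoeffOK b₀ b₁)
    (hY : IsFundamentalSystem b₀ b₁ lam y₁ y₁' y₂ y₂') {ν₀ ν₁ : Measure ℝ}
    [IsFiniteMeasure ν₀] [IsFiniteMeasure ν₁] (hν₀ : ∀ᵐ x ∂ν₀, x ∈ Icc (0:ℝ) 1)
    (hν₁ : ∀ᵐ x ∂ν₁, x ∈ Icc (0:ℝ) 1)
    (hΔ : ((∫ x, y₁ x ∂ν₀) - 1) * ((∫ x, y₂ x ∂ν₁) - y₂ 1) -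
        (∫ x, y₂ x ∂ν₀) * ((∫ x, y₁ x ∂ν₁) - y₁ 1) ≠ 0)
    (hy : IsSolAux b₀ b₁ lam f y y') (hy₀ : y 0 = ∫ x, y x ∂ν₀) (hy₁ : y 1 = ∫ x, y x ∂ν₁)
    (hz : IsSolAux b₀ b₁ lam f z z') (hz₀ : z 0 = ∫ x, z x ∂ν₀) (hz₁ : z 1 = ∫ x, z x ∂ν₁) :
    ∀ x ∈ Icc (0:ℝ) 1, y x = z x := by
  intro x hx
  refine sub_eq_zero.1 (hY.eq_zero_of_boundary hco hν₀ hν₁ hΔ (hy.sub hz) ?_ ?_ x hx)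
  · rw [integral_sub (hy.integrable hν₀) (hz.integrable hν₀), ← hy₀, ← hz₀]
  · rw [integral_sub (hy.integrable hν₁) (hz.integrable hν₁), ← hy₁, ← hz₁]

end Solutions

theorem stmt4_general (b₀ b₁ : ℝ → ℝ) (hco : CoeffOK b₀ b₁)
    (ν₀ ν₁ : Measure ℝ) [IsProbabilityMeasure ν₀] [IsProbabilityMeasure ν₁]
    (hν₀ : ν₀ (Ioo (0:ℝ) 1)ᶜ = 0) (hν₁ : ν₁ (Ioo (0:ℝ) 1)ᶜ = 0)
    (Y₁ Y₁' Y₂ Y₂' : ℂ → ℝ → ℂ)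
    (hY₁ : ∀ lam : ℂ, IsSol b₀ b₁ lam (Y₁ lam) (Y₁' lam) ∧ Y₁ lam 0 = 1 ∧ Y₁' lam 0 = 0)
    (hY₂ : ∀ lam : ℂ, IsSol b₀ b₁ lam (Y₂ lam) (Y₂' lam) ∧ Y₂ lam 0 = 0 ∧ Y₂' lam 0 = 1)
    (lam : ℂ)
    (hΔ : ((∫ x, Y₁ lam x ∂ν₀) - 1) * ((∫ x, Y₂ lam x ∂ν₁) - Y₂ lam 1) -
        (∫ x, Y₂ lam x ∂ν₀) * ((∫ x, Y₁ lam x ∂ν₁) - Y₁ lam 1) ≠ 0)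
    (f : ℝ → ℂ)
    (u₀ u₀' : ℝ → ℂ) (hu₀ : IsSolAux b₀ b₁ lam f u₀ u₀')
    (hu₀0 : u₀ 0 = 0) (hu₀1 : u₀ 1 = 0) :
    letI Δ : ℂ := ((∫ x, Y₁ lam x ∂ν₀) - 1) * ((∫ x, Y₂ lam x ∂ν₁) - Y₂ lam 1) -
        (∫ x, Y₂ lam x ∂ν₀) * ((∫ x, Y₁ lam x ∂ν₁) - Y₁ lam 1)
    letI g₀ : ℝ → ℂ := fun x =>
      ((Y₂ lam 1 - ∫ t, Y₂ lam t ∂ν₁) * Y₁ lam x -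
        (Y₁ lam 1 - ∫ t, Y₁ lam t ∂ν₁) * Y₂ lam x) / Δ
    letI g₀' : ℝ → ℂ := fun x =>
      ((Y₂ lam 1 - ∫ t, Y₂ lam t ∂ν₁) * Y₁' lam x -
        (Y₁ lam 1 - ∫ t, Y₁ lam t ∂ν₁) * Y₂' lam x) / Δ
    letI g₁ : ℝ → ℂ := fun x =>
      ((1 - ∫ t, Y₁ lam t ∂ν₀) * Y₂ lam x + Y₁ lam x * ∫ t, Y₂ lam t ∂ν₀) / Δ
    letI g₁' : ℝ → ℂ := fun x =>
      ((1 - ∫ t, Y₁ lam t ∂ν₀) * Y₂' lam x + Y₁' lam x * ∫ t, Y₂ lam t ∂ν₀) / Δ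
    letI u : ℝ → ℂ := fun x =>
      u₀ x + (∫ t, u₀ t ∂ν₀) * g₀ x + (∫ t, u₀ t ∂ν₁) * g₁ x
    letI u' : ℝ → ℂ := fun x =>
      u₀' x + (∫ t, u₀ t ∂ν₀) * g₀' x + (∫ t, u₀ t ∂ν₁) * g₁' x
    IsSolAux b₀ b₁ lam f u u' ∧
      u 0 = ∫ x, u x ∂ν₀ ∧ u 1 = ∫ x, u x ∂ν₁ ∧
      (∀ v v' : ℝ → ℂ, IsSolAux b₀ b₁ lam f v v' →
        v 0 = ∫ x, v x ∂ν₀ → v 1 = ∫ x, v x ∂ν₁ →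
        ∀ x ∈ Icc (0:ℝ) 1, v x = u x) := by
  set Δ : ℂ := ((∫ x, Y₁ lam x ∂ν₀) - 1) * ((∫ x, Y₂ lam x ∂ν₁) - Y₂ lam 1) -
    (∫ x, Y₂ lam x ∂ν₀) * ((∫ x, Y₁ lam x ∂ν₁) - Y₁ lam 1)
  set g₀ : ℝ → ℂ := fun x => ((Y₂ lam 1 - ∫ t, Y₂ lam t ∂ν₁) * Y₁ lam x -
    (Y₁ lam 1 - ∫ t, Y₁ lam t ∂ν₁) * Y₂ lam x) / Δ
  set g₀' : ℝ → ℂ := fun x => ((Y₂ lam 1 - ∫ t, Y₂ lam t ∂ν₁) * Y₁' lam x -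
    (Y₁ lam 1 - ∫ t, Y₁ lam t ∂ν₁) * Y₂' lam x) / Δ
  set g₁ : ℝ → ℂ := fun x =>
    ((1 - ∫ t, Y₁ lam t ∂ν₀) * Y₂ lam x + Y₁ lam x * ∫ t, Y₂ lam t ∂ν₀) / Δ
  set g₁' : ℝ → ℂ := fun x =>
    ((1 - ∫ t, Y₁ lam t ∂ν₀) * Y₂' lam x + Y₁' lam x * ∫ t, Y₂ lam t ∂ν₀) / Δ
  set u : ℝ → ℂ := fun x => u₀ x + (∫ t, u₀ t ∂ν₀) * g₀ x + (∫ t, u₀ t ∂ν₁) * g₁ x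
  have hY : IsFundamentalSystem b₀ b₁ lam (Y₁ lam) (Y₁' lam) (Y₂ lam) (Y₂' lam) :=
    ⟨(hY₁ lam).1, (hY₁ lam).2.1, (hY₁ lam).2.2, (hY₂ lam).1, (hY₂ lam).2.1, (hY₂ lam).2.2⟩
  have hν₀' : ∀ᵐ x ∂ν₀, x ∈ Icc (0:ℝ) 1 := (ae_iff.2 hν₀).mono fun _ hx => Ioo_subset_Icc_self hx
  have hν₁' : ∀ᵐ x ∂ν₁, x ∈ Icc (0:ℝ) 1 := (ae_iff.2 hν₁).mono fun _ hx => Ioo_subset_Icc_self hx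
  have hg₀ : IsSol b₀ b₁ lam g₀ g₀' := by
    convert hY.isSol₁.linearCombination hY.isSol₂ ((Y₂ lam 1 - ∫ t, Y₂ lam t ∂ν₁) / Δ)
      (-(Y₁ lam 1 - ∫ t, Y₁ lam t ∂ν₁) / Δ) using 1 <;> funext x <;> simp only [g₀, g₀'] <;> ring
  have hg₁ : IsSol b₀ b₁ lam g₁ g₁' := by
    convert hY.isSol₁.linearCombination hY.isSol₂ ((∫ t, Y₂ lam t ∂ν₀) / Δ)
      ((1 - ∫ t, Y₁ lam t ∂ν₀) / Δ) using 1 <;> funext x <;> simp only [g₁, g₁'] <;> ring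
  have hu : IsSolAux b₀ b₁ lam f u _ := (hu₀.add_mul_isSol hg₀ _).add_mul_isSol hg₁ _
  have hbc : u 0 = ∫ x, u x ∂ν₀ ∧ u 1 = ∫ x, u x ∂ν₁ := by
    have hΔ' : Δ ≠ 0 := hΔ
    rw [hY.integral_add_mul_add_mul hco hu₀ hg₀ hg₁ _ _ hν₀',
      hY.integral_add_mul_add_mul hco hu₀ hg₀ hg₁ _ _ hν₁']
    simp only [u, g₀, g₀', g₁, g₁', hu₀0, hu₀1, hY.init₁, hY.init₁', hY.init₂, hY.init₂']
    constructor <;> field_simp <;> simp only [Δ] <;> ring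
  exact ⟨hu, hbc.1, hbc.2, fun v v' hv hv0 hv1 =>
    hv.eq_of_boundary hco hY hν₀' hν₁' hΔ hv0 hv1 hu hbc.1 hbc.2⟩

theorem stmt4 (b₀ b₁ : ℝ → ℝ) (hco : CoeffOK b₀ b₁)
    (ν₀ ν₁ : Measure ℝ) [IsProbabilityMeasure ν₀] [IsProbabilityMeasure ν₁]
    (hν₀ : ν₀ (Ioo (0:ℝ) 1)ᶜ = 0) (hν₁ : ν₁ (Ioo (0:ℝ) 1)ᶜ = 0)
    (Y₁ Y₁' Y₂ Y₂' : ℂ → ℝ → ℂ)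
    (hY₁ : ∀ lam : ℂ, IsSol b₀ b₁ lam (Y₁ lam) (Y₁' lam) ∧ Y₁ lam 0 = 1 ∧ Y₁' lam 0 = 0)
    (hY₂ : ∀ lam : ℂ, IsSol b₀ b₁ lam (Y₂ lam) (Y₂' lam) ∧ Y₂ lam 0 = 0 ∧ Y₂' lam 0 = 1)
    (lam : ℂ)
    (hΔ : ((∫ x, Y₁ lam x ∂ν₀) - 1) * ((∫ x, Y₂ lam x ∂ν₁) - Y₂ lam 1) -
        (∫ x, Y₂ lam x ∂ν₀) * ((∫ x, Y₁ lam x ∂ν₁) - Y₁ lam 1) ≠ 0)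
    (f : ℝ → ℂ) (hfm : Measurable f)
    (hf : IntegrableOn (fun x => ‖f x‖ ^ 2 / |b₀ x|) (Ioo 0 1) volume)
    (u₀ u₀' : ℝ → ℂ) (hu₀ : IsSolAux b₀ b₁ lam f u₀ u₀')
    (hu₀0 : u₀ 0 = 0) (hu₀1 : u₀ 1 = 0) :
    letI Δ : ℂ := ((∫ x, Y₁ lam x ∂ν₀) - 1) * ((∫ x, Y₂ lam x ∂ν₁) - Y₂ lam 1) -
        (∫ x, Y₂ lam x ∂ν₀) * ((∫ x, Y₁ lam x ∂ν₁) - Y₁ lam 1)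
    letI g₀ : ℝ → ℂ := fun x =>
      ((Y₂ lam 1 - ∫ t, Y₂ lam t ∂ν₁) * Y₁ lam x -
        (Y₁ lam 1 - ∫ t, Y₁ lam t ∂ν₁) * Y₂ lam x) / Δ
    letI g₀' : ℝ → ℂ := fun x =>
      ((Y₂ lam 1 - ∫ t, Y₂ lam t ∂ν₁) * Y₁' lam x -
        (Y₁ lam 1 - ∫ t, Y₁ lam t ∂ν₁) * Y₂' lam x) / Δ
    letI g₁ : ℝ → ℂ := fun x =>
      ((1 - ∫ t, Y₁ lam t ∂ν₀) * Y₂ lam x + Y₁ lam x * ∫ t, Y₂ lam t ∂ν₀) / Δ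
    letI g₁' : ℝ → ℂ := fun x =>
      ((1 - ∫ t, Y₁ lam t ∂ν₀) * Y₂' lam x + Y₁' lam x * ∫ t, Y₂ lam t ∂ν₀) / Δ
    letI u : ℝ → ℂ := fun x =>
      u₀ x + (∫ t, u₀ t ∂ν₀) * g₀ x + (∫ t, u₀ t ∂ν₁) * g₁ x
    letI u' : ℝ → ℂ := fun x =>
      u₀' x + (∫ t, u₀ t ∂ν₀) * g₀' x + (∫ t, u₀ t ∂ν₁) * g₁' x
    IsSolAux b₀ b₁ lam f u u' ∧
      u 0 = ∫ x, u x ∂ν₀ ∧ u 1 = ∫ x, u x ∂ν₁ ∧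
      (∀ v v' : ℝ → ℂ, IsSolAux b₀ b₁ lam f v v' →
        v 0 = ∫ x, v x ∂ν₀ → v 1 = ∫ x, v x ∂ν₁ →
        ∀ x ∈ Icc (0:ℝ) 1, v x = u x) :=
  stmt4_general b₀ b₁ hco ν₀ ν₁ hν₀ hν₁ Y₁ Y₁' Y₂ Y₂' hY₁ hY₂ lam hΔ f u₀ u₀' hu₀ hu₀0 hu₀1
end
end

section
/- Fix a ∈ (0,1). The entire function Δ_a has a zero of order at least 2 (i.e., there exists λ̂ ∈ ℂ with Δ_a(λ̂) = 0 and Δ_a'(λ̂) = 0) if and only if a is rational. -/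
/-! Write `λ = s²`, so that `Δ_a(s²) = -(4/s) P(s)` with `P(s) = sin(s a/2) sin(s (1-a)/2) sin(s/2)`.
At `λ = 0` the derivative is `-a(1-a)/2 ≠ 0`. Away from `0`, `s ↦ s²` is locally biholomorphic and
`-4/s` does not vanish, so double zeros of `Δ_a` correspond to double zeros of `P`. Because
`a/2 + (1-a)/2 = 1/2`, two of the three sine factors vanish only together with the third, and a
zero of a single factor is simple; hence double zeros of `P` are the `s ≠ 0` with `s a/2, s/2 ∈ πℤ`,
which exist exactly when `a` is rational. -/

open Set

noncomputable section

open Complex Filter Topology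

namespace Complex

theorem cos_ne_zero_of_sin_eq_zero {x : ℂ} (h : sin x = 0) : cos x ≠ 0 := by
  intro hc
  simpa [h, hc] using sin_sq_add_cos_sq x

theorem sin_add_eq_zero_iff_of_sin_eq_zero {x y : ℂ} (hx : sin x = 0) :
    sin (x + y) = 0 ↔ sin y = 0 := by
  rw [sin_add, hx, zero_mul, zero_add, mul_eq_zero, or_iff_right (cos_ne_zero_of_sin_eq_zero hx)]

theorem tendsto_sin_mul_div_self (c : ℂ) :
    Tendsto (fun t : ℂ => sin (t * c) / t) (𝓝[≠] 0) (𝓝 c) := by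
  have h : HasDerivAt (fun t : ℂ => sin (t * c)) c 0 := by
    simpa using ((hasDerivAt_id (0 : ℂ)).mul_const c).csin
  refine (hasDerivAt_iff_tendsto_slope.mp h).congr fun t => ?_
  simp [slope_def_field]

end Complex

theorem double_zero_iff_of_comp_eventuallyEq_mul {𝕜 : Type*} [NontriviallyNormedField 𝕜]
    {f φ g P : 𝕜 → 𝕜} {s₀ φ' : 𝕜} (hf : DifferentiableAt 𝕜 f (φ s₀))
    (hφ : HasDerivAt φ φ' s₀) (hφ' : φ' ≠ 0) (hg : DifferentiableAt 𝕜 g s₀) (hg₀ : g s₀ ≠ 0)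
    (hP : DifferentiableAt 𝕜 P s₀) (h : f ∘ φ =ᶠ[𝓝 s₀] g * P) :
    f (φ s₀) = 0 ∧ deriv f (φ s₀) = 0 ↔ P s₀ = 0 ∧ deriv P s₀ = 0 := by
  have hval : f (φ s₀) = g s₀ * P s₀ := h.eq_of_nhds
  have hderiv : deriv f (φ s₀) * φ' = deriv g s₀ * P s₀ + g s₀ * deriv P s₀ :=
    (hf.hasDerivAt.comp s₀ hφ).unique
      ((hg.hasDerivAt.mul hP.hasDerivAt).congr_of_eventuallyEq h)
  rw [hval, mul_eq_zero, or_iff_right hg₀]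
  refine and_congr_right fun hP₀ => ?_
  rw [hP₀, mul_zero, zero_add] at hderiv
  constructor
  · intro hf'
    simpa [hf', hg₀] using hderiv
  · intro hP'
    simpa [hP', hφ'] using hderiv

def sinProd (c₁ c₂ c₃ s : ℂ) : ℂ := sin (s * c₁) * sin (s * c₂) * sin (s * c₃)

theorem hasDerivAt_sinProd (c₁ c₂ c₃ s : ℂ) :
    HasDerivAt (sinProd c₁ c₂ c₃)
      (c₁ * cos (s * c₁) * sin (s * c₂) * sin (s * c₃)
        + c₂ * sin (s * c₁) * cos (s * c₂) * sin (s * c₃)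
        + c₃ * sin (s * c₁) * sin (s * c₂) * cos (s * c₃)) s := by
  have hsin (c : ℂ) : HasDerivAt (fun t => sin (t * c)) (c * cos (s * c)) s := by
    simpa [mul_comm] using ((hasDerivAt_id s).mul_const c).csin
  refine (((hsin c₁).mul (hsin c₂)).mul (hsin c₃)).congr_deriv ?_
  simp only [Pi.mul_apply]
  ring

theorem sinProd_eq_zero_and_deriv_eq_zero_iff {c₁ c₂ c₃ : ℂ} (hc₁ : c₁ ≠ 0) (hc₂ : c₂ ≠ 0)
    (hc₃ : c₃ ≠ 0) (hc : c₁ + c₂ = c₃) (s : ℂ) :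
    sinProd c₁ c₂ c₃ s = 0 ∧ deriv (sinProd c₁ c₂ c₃) s = 0 ↔
      sin (s * c₁) = 0 ∧ sin (s * c₃) = 0 := by
  rw [(hasDerivAt_sinProd c₁ c₂ c₃ s).deriv, sinProd]
  have hs₃ : s * c₃ = s * c₁ + s * c₂ := by rw [← hc, mul_add]
  set x := s * c₁
  set y := s * c₂
  rw [hs₃]
  constructor
  · rintro ⟨h₀, h₁⟩
    have hy (hy : sin y = 0) : sin (x + y) = 0 ↔ sin x = 0 := by
      rw [add_comm, sin_add_eq_zero_iff_of_sin_eq_zero hy]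
    rcases mul_eq_zero.mp h₀ with h₀ | hx₃
    · rcases mul_eq_zero.mp h₀ with hx | hy₀
      · have hx' := sin_add_eq_zero_iff_of_sin_eq_zero hx (y := y)
        simp [hx, hc₁, cos_ne_zero_of_sin_eq_zero hx, hx'] at h₁
        exact ⟨hx, hx'.mpr h₁⟩
      · simp [hy₀, hc₂, cos_ne_zero_of_sin_eq_zero hy₀, hy hy₀] at h₁
        exact ⟨h₁, (hy hy₀).mpr h₁⟩
    · simp [hx₃, hc₃, cos_ne_zero_of_sin_eq_zero hx₃] at h₁
      exact ⟨h₁.elim id fun hy₀ => (hy hy₀).mp hx₃, hx₃⟩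
  · rintro ⟨hx, hx₃⟩
    simp [hx, hx₃]

theorem deriv_zero_eq_of_comp_sq_eq_div_mul_sinProd {f : ℂ → ℂ} {b c₁ c₂ c₃ : ℂ}
    (hf : DifferentiableAt ℂ f 0) (h₀ : f 0 = 0)
    (h : ∀ s ≠ 0, f (s ^ 2) = b / s * sinProd c₁ c₂ c₃ s) :
    deriv f 0 = b * (c₁ * c₂ * c₃) := by
  have hsq : Tendsto (fun t : ℂ => t ^ 2) (𝓝[≠] 0) (𝓝[≠] 0) := by
    refine tendsto_nhdsWithin_of_tendsto_nhds_of_eventually_within _ ?_ ?_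
    · simpa using ((continuous_pow 2).tendsto (0 : ℂ)).mono_left nhdsWithin_le_nhds
    · filter_upwards [self_mem_nhdsWithin] with t ht using pow_ne_zero 2 ht
  have hlim := (((tendsto_sin_mul_div_self c₁).mul (tendsto_sin_mul_div_self c₂)).mul
    (tendsto_sin_mul_div_self c₃)).const_mul b
  refine tendsto_nhds_unique (((hasDerivAt_iff_tendsto_slope.mp hf.hasDerivAt).comp hsq).congr' ?_)
    hlim
  filter_upwards [self_mem_nhdsWithin] with t ht
  simp only [Function.comp_apply, slope_def_field, h₀, sub_zero, h t ht, sinProd]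
  field_simp

theorem exists_sin_mul_half_eq_zero_iff (a : ℝ) :
    (∃ s : ℂ, s ≠ 0 ∧ sin (s * (a / 2)) = 0 ∧ sin (s * 2⁻¹) = 0) ↔ ∃ q : ℚ, (q : ℝ) = a := by
  have hπ : (Real.pi : ℂ) ≠ 0 := ofReal_ne_zero.mpr Real.pi_ne_zero
  constructor
  · rintro ⟨s, hs, ha, h₂⟩
    obtain ⟨k, hk⟩ := sin_eq_zero_iff.mp ha
    obtain ⟨n, hn⟩ := sin_eq_zero_iff.mp h₂
    have hn₀ : (n : ℂ) ≠ 0 := by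
      rintro hn₀
      simp [hn₀, hs] at hn
    have hank : (a : ℂ) * n = k :=
      mul_right_cancel₀ hπ (by linear_combination hk - (a : ℂ) * hn)
    refine ⟨k / n, ofReal_injective ?_⟩
    push_cast
    rw [div_eq_iff hn₀, hank]
  · rintro ⟨q, rfl⟩
    have hq : (q.den : ℂ) * ((q : ℝ) : ℂ) = q.num := by exact_mod_cast q.den_mul_eq_num
    refine ⟨2 * q.den * Real.pi, by simp [Real.pi_ne_zero], ?_, ?_⟩
    · convert sin_int_mul_pi q.num using 2
      linear_combination (Real.pi : ℂ) * hq
    · convert sin_nat_mul_pi q.den using 2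
      ring

theorem stmt12 (a : ℝ) (ha : a ∈ Ioo (0:ℝ) 1)
    (Δa : ℂ → ℂ) (hΔent : Differentiable ℂ Δa)
    (hΔval : ∀ lam : ℂ, lam ≠ 0 → ∀ s : ℂ, s ^ 2 = lam →
      Δa lam = -(4 / s) * Complex.sin (s * (1 - (a : ℂ)) / 2) *
        Complex.sin (s * (a : ℂ) / 2) * Complex.sin (s / 2)) :
    (∃ lamh : ℂ, Δa lamh = 0 ∧ deriv Δa lamh = 0) ↔ ∃ q : ℚ, (q : ℝ) = a := by
  have ha₀ : (a : ℂ) ≠ 0 := ofReal_ne_zero.mpr ha.1.ne'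
  have ha₁ : (1 - a : ℂ) ≠ 0 := sub_ne_zero.mpr (by exact_mod_cast ha.2.ne')
  have hΔ : ∀ s ≠ 0, Δa (s ^ 2) = -4 / s * sinProd (a / 2) ((1 - a) / 2) 2⁻¹ s := by
    intro s hs
    rw [hΔval _ (pow_ne_zero 2 hs) s rfl, sinProd]
    ring_nf
  have hderiv₀ : Δa 0 = 0 → deriv Δa 0 ≠ 0 := fun h₀ => by
    rw [deriv_zero_eq_of_comp_sq_eq_div_mul_sinProd (hΔent 0) h₀ hΔ]
    simp [ha₀, ha₁]
  calc (∃ lamh : ℂ, Δa lamh = 0 ∧ deriv Δa lamh = 0)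
      ↔ ∃ s : ℂ, s ≠ 0 ∧ Δa (s ^ 2) = 0 ∧ deriv Δa (s ^ 2) = 0 := by
        constructor
        · rintro ⟨lam, h⟩
          have hlam : lam ≠ 0 := by
            rintro rfl
            exact hderiv₀ h.1 h.2
          obtain ⟨s, rfl⟩ := IsAlgClosed.exists_pow_nat_eq lam two_pos
          exact ⟨s, by rintro rfl; simp at hlam, h⟩
        · rintro ⟨s, -, h⟩
          exact ⟨s ^ 2, h⟩
    _ ↔ ∃ s : ℂ, s ≠ 0 ∧ sinProd (a / 2) ((1 - a) / 2) 2⁻¹ s = 0 ∧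
          deriv (sinProd (a / 2) ((1 - a) / 2) 2⁻¹) s = 0 :=
        exists_congr fun s => and_congr_right fun hs =>
          double_zero_iff_of_comp_eventuallyEq_mul (hΔent _) (hasDerivAt_pow 2 s) (by simp [hs])
            (differentiableAt_const _ |>.div differentiableAt_id hs) (by simp [hs])
            (hasDerivAt_sinProd _ _ _ s).differentiableAt
            ((eventually_ne_nhds hs).mono fun t ht => hΔ t ht)
    _ ↔ ∃ s : ℂ, s ≠ 0 ∧ sin (s * (a / 2)) = 0 ∧ sin (s * 2⁻¹) = 0 :=
        exists_congr fun s => and_congr_right fun _ =>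
          sinProd_eq_zero_and_deriv_eq_zero_iff (div_ne_zero ha₀ two_ne_zero)
            (div_ne_zero ha₁ two_ne_zero) (by norm_num) (by ring) s
    _ ↔ ∃ q : ℚ, (q : ℝ) = a := exists_sin_mul_half_eq_zero_iff a
end
end
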